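/- Let 𝔰 be a finite-dimensional solvable Lie algebra with inner product, with orthogonal decomposition 𝔰 = 𝔞 ⊕ 𝔫 where 𝔫 contains [𝔰,𝔰]. If ad_a is a normal operator (commutes with its adjoint) for every a ∈ 𝔞 and 𝔞 is orthogonal to [𝔰,𝔰], then [𝔞,𝔞] = 0. -/

import Mathlib

open scoped RealInnerProductSpace

attribute [local instance 10] LieRing.toAddCommGroup

/-- In a finite-dimensional metric solvable Lie algebra `𝔰` with `𝔞 = 𝔫ᗮ` for a
submodule `𝔫` containing `[𝔰,𝔰]`, if `ad_a` is a normal operator for every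
`a ∈ 𝔞` then `[𝔞, 𝔞] = 0`. -/
theorem abelian_of_normal_ad {𝔰 : Type*} [NormedAddCommGroup 𝔰]
    [InnerProductSpace ℝ 𝔰] [LieRing 𝔰] [LieAlgebra ℝ 𝔰]
    [FiniteDimensional ℝ 𝔰] [LieAlgebra.IsSolvable 𝔰]
    (𝔫 : Submodule ℝ 𝔰) (hcomm : ∀ x y : 𝔰, ⁅x, y⁆ ∈ 𝔫)
    (ad : 𝔰 → 𝔰 →ₗ[ℝ] 𝔰) (had : ∀ a y : 𝔰, ad a y = ⁅a, y⁆)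
    (hnormal : ∀ a ∈ 𝔫ᗮ,
      LinearMap.adjoint (ad a) ∘ₗ ad a = ad a ∘ₗ LinearMap.adjoint (ad a)) :
    ∀ a ∈ 𝔫ᗮ, ∀ b ∈ 𝔫ᗮ, ⁅a, b⁆ = 0 := by
  intro a ha b hb
  set T := ad a with hT
  -- The adjoint of `ad a` kills `b`, since `b ⟂ 𝔫 ⊇ [𝔰,𝔰]`.
  have hTb : LinearMap.adjoint T b = 0 := by
    rw [← inner_self_eq_zero (𝕜 := ℝ)]
    rw [LinearMap.adjoint_inner_left]
    have := hb (⁅a, LinearMap.adjoint T b⁆) (hcomm _ _)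
    rw [real_inner_comm] at this
    rw [had]
    exact this
  have key : ⟪T b, T b⟫ = 0 := by
    rw [← LinearMap.adjoint_inner_right]
    have : LinearMap.adjoint T (T b) = 0 := by
      have h := congrArg (fun f => f b) (hnormal a ha)
      simp only [LinearMap.comp_apply] at h
      rw [← hT] at h
      rw [h, hTb, map_zero]
    rw [this, inner_zero_right]
  have : T b = 0 := by rwa [inner_self_eq_zero] at key
  rw [had] at this
  exact this
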